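/- arXiv:1009.0029 — 2 statements merged into one kernel-verified Lean document; each statement's English description precedes it below -/
import Mathlib

section
/- Let Q be a finite acyclic quiver and S, T subquivers of Q, each having a unique source (s₀ and t₀ respectively). Then every connected component of the fiber product P_{S,s₀} ×_Q P_{T,t₀}, regarded as a quiver over Q via the restricted structure map, is isomorphic over Q to a path quiver P_{W,j}, where W is a subquiver of Q and j is a vertex of W with no incoming arrows in W such that every vertex of W is the terminal vertex of a path in W starting at j. -/
/-! ## Bundled quivers and quivers over a fixed quiver -/

/-- A (bundled) quiver: a set of vertices, a set of arrows, and source/target maps. -/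
structure BQuiv : Type 1 where
  V : Type
  E : Type
  s : E → V
  t : E → V

namespace BQuiv

/-- A morphism of quivers (a "coloring"). -/
@[ext]
structure Hom (A B : BQuiv) where
  onV : A.V → B.V
  onE : A.E → B.E
  hs : ∀ e : A.E, B.s (onE e) = onV (A.s e)
  ht : ∀ e : A.E, B.t (onE e) = onV (A.t e)

/-- Composition of morphisms of quivers. -/
def Hom.comp {A B C : BQuiv} (f : Hom A B) (g : Hom B C) : Hom A C where
  onV v := g.onV (f.onV v)
  onE e := g.onE (f.onE e)
  hs e := by rw [g.hs, f.hs]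
  ht e := by rw [g.ht, f.ht]

/-- `Q.IsPathFrom a b es` : the list of edges `es` forms a path from `a` to `b` in `Q`. -/
def IsPathFrom (Q : BQuiv) : Q.V → Q.V → List Q.E → Prop
  | a, b, [] => a = b
  | a, b, e :: es => Q.s e = a ∧ Q.IsPathFrom (Q.t e) b es

theorem IsPathFrom.snoc {Q : BQuiv} {a b : Q.V} {es : List Q.E}
    (h : Q.IsPathFrom a b es) {e : Q.E} (he : Q.s e = b) :
    Q.IsPathFrom a (Q.t e) (es ++ [e]) := by
  induction es generalizing a with
  | nil =>
      simp only [IsPathFrom] at h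
      subst h
      exact ⟨he, rfl⟩
  | cons f fs ih =>
      obtain ⟨h1, h2⟩ := h
      exact ⟨h1, ih h2⟩

theorem IsPathFrom.append {Q : BQuiv} {a b c : Q.V} {es fs : List Q.E}
    (h : Q.IsPathFrom a b es) (h' : Q.IsPathFrom b c fs) :
    Q.IsPathFrom a c (es ++ fs) := by
  induction es generalizing a with
  | nil =>
      simp only [IsPathFrom] at h
      subst h
      exact h'
  | cons f gs ih =>
      obtain ⟨h1, h2⟩ := h
      exact ⟨h1, ih h2⟩

/-- `Q` is acyclic if every path from a vertex to itself is trivial. -/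
def IsAcyclic (Q : BQuiv) : Prop :=
  ∀ (v : Q.V) (es : List Q.E), Q.IsPathFrom v v es → es = []

/-! ## Subquivers -/

/-- A subquiver of `Q`: a subset of vertices and a subset of arrows with endpoints in it. -/
structure Sub (Q : BQuiv) where
  verts : Set Q.V
  edges : Set Q.E
  src_mem : ∀ e ∈ edges, Q.s e ∈ verts
  tgt_mem : ∀ e ∈ edges, Q.t e ∈ verts

/-- The quiver underlying a subquiver. -/
def Sub.toBQuiv {Q : BQuiv} (T : Sub Q) : BQuiv where
  V := T.verts
  E := T.edges
  s e := ⟨Q.s e.1, T.src_mem e.1 e.2⟩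
  t e := ⟨Q.t e.1, T.tgt_mem e.1 e.2⟩

/-- The inclusion of a subquiver; `E_T` is `(T.toBQuiv, T.incl)` as a quiver over `Q`. -/
def Sub.incl {Q : BQuiv} (T : Sub Q) : Hom T.toBQuiv Q where
  onV := Subtype.val
  onE := Subtype.val
  hs _ := rfl
  ht _ := rfl

/-- `T.IsPathIn a b es` : `es` is a path from `a` to `b` lying entirely in the
subquiver `T`. -/
def Sub.IsPathIn {Q : BQuiv} (T : Sub Q) (a b : Q.V) (es : List Q.E) : Prop :=
  a ∈ T.verts ∧ Q.IsPathFrom a b es ∧ ∀ e ∈ es, e ∈ T.edges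

/-- Intersection of subquivers. -/
def Sub.inter {Q : BQuiv} (S T : Sub Q) : Sub Q where
  verts := S.verts ∩ T.verts
  edges := S.edges ∩ T.edges
  src_mem e he := ⟨S.src_mem e he.1, T.src_mem e he.2⟩
  tgt_mem e he := ⟨S.tgt_mem e he.1, T.tgt_mem e he.2⟩

/-- The full subquiver (all of `Q`). -/
def fullSub (Q : BQuiv) : Sub Q where
  verts := Set.univ
  edges := Set.univ
  src_mem _ _ := trivial
  tgt_mem _ _ := trivial

/-- `S ⊆ T` for subquivers. -/
def Sub.le {Q : BQuiv} (S T : Sub Q) : Prop :=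
  S.verts ⊆ T.verts ∧ S.edges ⊆ T.edges

/-- The successor closure of a vertex `j` in a subquiver `U`: the vertices of `U`
reachable from `j` by a path in `U`, together with all arrows of `U` between them. -/
def succClosure {Q : BQuiv} (U : Sub Q) (j : Q.V) : Sub Q where
  verts := {v | ∃ es, U.IsPathIn j v es}
  edges := {e | e ∈ U.edges ∧ (∃ es, U.IsPathIn j (Q.s e) es) ∧ ∃ es, U.IsPathIn j (Q.t e) es}
  src_mem _ he := he.2.1
  tgt_mem _ he := he.2.2

/-- `s₀` is the unique source of the subquiver `S`. -/
def Sub.IsUniqueSource {Q : BQuiv} (S : Sub Q) (s₀ : Q.V) : Prop :=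
  s₀ ∈ S.verts ∧ (∀ e ∈ S.edges, Q.t e ≠ s₀) ∧
    ∀ v ∈ S.verts, (∀ e ∈ S.edges, Q.t e ≠ v) → v = s₀

/-- `u₀` is the unique sink of the subquiver `S`. -/
def Sub.IsUniqueSink {Q : BQuiv} (S : Sub Q) (u₀ : Q.V) : Prop :=
  u₀ ∈ S.verts ∧ (∀ e ∈ S.edges, Q.s e ≠ u₀) ∧
    ∀ v ∈ S.verts, (∀ e ∈ S.edges, Q.s e ≠ v) → v = u₀

/-! ## Path and copath quivers -/

/-- The path quiver `P_{T,t}`: vertices are the paths in `T` starting at `t` (recorded as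
a pair (endpoint, list of edges)); there is one arrow `p ⟶ p·α` for each path-vertex `p`
and each arrow `α` of `T` starting at the endpoint of `p`. -/
def PathQ {Q : BQuiv} (T : Sub Q) (t : Q.V) : BQuiv where
  V := {x : Q.V × List Q.E // T.IsPathIn t x.1 x.2}
  E := {y : (Q.V × List Q.E) × Q.E //
        T.IsPathIn t y.1.1 y.1.2 ∧ y.2 ∈ T.edges ∧ Q.s y.2 = y.1.1}
  s y := ⟨y.1.1, y.2.1⟩
  t y := ⟨(Q.t y.1.2, y.1.1.2 ++ [y.1.2]),
    ⟨y.2.1.1, (y.2.1.2.1).snoc y.2.2.2, by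
      intro e he
      rcases List.mem_append.1 he with h | h
      · exact y.2.1.2.2 e h
      · rw [List.mem_singleton.1 h]; exact y.2.2.1⟩⟩

/-- The structure map of the path quiver `P_{T,t}` as a quiver over `Q`: a path is sent
to its terminal vertex, and the arrow `(p, α)` to `α`. -/
def pathPi {Q : BQuiv} (T : Sub Q) (t : Q.V) : Hom (PathQ T t) Q where
  onV p := p.1.1
  onE y := y.1.2
  hs y := y.2.2.2
  ht _ := rfl

/-- The copath quiver `I_{T,u}`: vertices are the paths in `T` ending at `u` (recorded as
a pair (starting vertex, list of edges)); there is one arrow `α·q ⟶ q` for each vertex `q`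
and each arrow `α` of `T` ending at the starting vertex of `q`. -/
def CoPathQ {Q : BQuiv} (T : Sub Q) (u : Q.V) : BQuiv where
  V := {x : Q.V × List Q.E // T.IsPathIn x.1 u x.2}
  E := {y : Q.E × (Q.V × List Q.E) //
        T.IsPathIn y.2.1 u y.2.2 ∧ y.1 ∈ T.edges ∧ Q.t y.1 = y.2.1}
  s y := ⟨(Q.s y.1.1, y.1.1 :: y.1.2.2),
    ⟨T.src_mem _ y.2.2.1, ⟨rfl, by rw [y.2.2.2]; exact y.2.1.2.1⟩, by
      intro e he
      rcases List.mem_cons.1 he with h | h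
      · rw [h]; exact y.2.2.1
      · exact y.2.1.2.2 e h⟩⟩
  t y := ⟨y.1.2, y.2.1⟩

/-- The structure map of the copath quiver `I_{T,u}` as a quiver over `Q`: a path is sent
to its starting vertex, and the arrow `(α, q)` to `α`. -/
def coPathPi {Q : BQuiv} (T : Sub Q) (u : Q.V) : Hom (CoPathQ T u) Q where
  onV p := p.1.1
  onE y := y.1.1
  hs _ := rfl
  ht y := y.2.2.2

/-! ## Fiber products -/

/-- The fiber product of two quivers over `Q`. -/
def Fib {Q Q' Q'' : BQuiv} (f' : Hom Q' Q) (f'' : Hom Q'' Q) : BQuiv where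
  V := {p : Q'.V × Q''.V // f'.onV p.1 = f''.onV p.2}
  E := {e : Q'.E × Q''.E // f'.onE e.1 = f''.onE e.2}
  s e := ⟨(Q'.s e.1.1, Q''.s e.1.2), by rw [← f'.hs, ← f''.hs, e.2]⟩
  t e := ⟨(Q'.t e.1.1, Q''.t e.1.2), by rw [← f'.ht, ← f''.ht, e.2]⟩

/-- The structure map of the fiber product as a quiver over `Q`. -/
def fibHom {Q Q' Q'' : BQuiv} (f' : Hom Q' Q) (f'' : Hom Q'' Q) : Hom (Fib f' f'') Q where
  onV p := f'.onV p.1.1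
  onE e := f'.onE e.1.1
  hs e := f'.hs e.1.1
  ht e := f'.ht e.1.1

/-! ## Connected components -/

/-- Adjacency in the underlying undirected graph. -/
def Adj (X : BQuiv) (v w : X.V) : Prop :=
  ∃ e : X.E, (X.s e = v ∧ X.t e = w) ∨ (X.s e = w ∧ X.t e = v)

/-- Connectivity in the underlying undirected graph. -/
def Conn (X : BQuiv) : X.V → X.V → Prop :=
  Relation.ReflTransGen (Adj X)

/-- The connected component of the vertex `v₀` in `X`, as a quiver. -/
def Component (X : BQuiv) (v₀ : X.V) : BQuiv where
  V := {v : X.V // Conn X v₀ v}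
  E := {e : X.E // Conn X v₀ (X.s e)}
  s e := ⟨X.s e.1, e.2⟩
  t e := ⟨X.t e.1, e.2.tail ⟨e.1, Or.inl ⟨rfl, rfl⟩⟩⟩

/-- The inclusion of a connected component. -/
def Component.incl (X : BQuiv) (v₀ : X.V) : Hom (Component X v₀) X where
  onV := Subtype.val
  onE := Subtype.val
  hs _ := rfl
  ht _ := rfl

/-- A connected component of a quiver over `Q`, regarded as a quiver over `Q` via the
restricted structure map. -/
def componentHom {X Q : BQuiv} (h : Hom X Q) (v₀ : X.V) : Hom (Component X v₀) Q :=
  (Component.incl X v₀).comp h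

/-! ## Isomorphisms over `Q` and wrappings -/

/-- An isomorphism of quivers over `Q`: a morphism of quivers commuting with the
structure maps which is bijective on vertices and on arrows. -/
structure OverIso {A B Q : BQuiv} (f : Hom A Q) (g : Hom B Q) where
  hom : Hom A B
  comm : hom.comp g = f
  bijV : Function.Bijective hom.onV
  bijE : Function.Bijective hom.onE

/-- A morphism of quivers is a wrapping if it is injective on parallel arrows. -/
def IsWrapping {A B : BQuiv} (f : Hom A B) : Prop :=
  ∀ e₁ e₂ : A.E, A.s e₁ = A.s e₂ → A.t e₁ = A.t e₂ → f.onE e₁ = f.onE e₂ → e₁ = e₂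

/-! ## Linear quivers tracing a path -/

/-- The linear quiver with vertices `0, 1, …, n` and one arrow `k-1 ⟶ k` for `1 ≤ k ≤ n`. -/
def LinQ (n : ℕ) : BQuiv where
  V := Fin (n + 1)
  E := Fin n
  s := Fin.castSucc
  t := Fin.succ

/-- The vertex reached after `k` steps along a list of edges starting at `a`. -/
def vertAt (Q : BQuiv) : Q.V → List Q.E → ℕ → Q.V
  | a, _, 0 => a
  | a, [], _ + 1 => a
  | _, e :: es, k + 1 => vertAt Q (Q.t e) es k

theorem vertAt_s {Q : BQuiv} {a b : Q.V} {es : List Q.E} (h : Q.IsPathFrom a b es)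
    (k : Fin es.length) : Q.s (es.get k) = vertAt Q a es k.1 := by
  induction es generalizing a with
  | nil => exact absurd k.2 (by simp)
  | cons e es ih =>
      obtain ⟨h1, h2⟩ := h
      rcases k with ⟨k, hk⟩
      cases k with
      | zero => exact h1
      | succ k => exact ih h2 ⟨k, Nat.lt_of_succ_lt_succ hk⟩

theorem vertAt_t {Q : BQuiv} {a b : Q.V} {es : List Q.E} (h : Q.IsPathFrom a b es)
    (k : Fin es.length) : Q.t (es.get k) = vertAt Q a es (k.1 + 1) := by
  induction es generalizing a with
  | nil => exact absurd k.2 (by simp)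
  | cons e es ih =>
      obtain ⟨h1, h2⟩ := h
      rcases k with ⟨k, hk⟩
      cases k with
      | zero =>
          cases es with
          | nil => rfl
          | cons f fs => exact (vertAt_s h2 ⟨0, by simp⟩) ▸ (h2.1).symm ▸ rfl
      | succ k => exact ih h2 ⟨k, Nat.lt_of_succ_lt_succ hk⟩

/-- The linear quiver of length `es.length` tracing the path `es` from `a` to `b`,
as a quiver over `Q`. -/
def traceHom (Q : BQuiv) (a b : Q.V) (es : List Q.E) (h : Q.IsPathFrom a b es) :
    Hom (LinQ es.length) Q where
  onV k := vertAt Q a es k.1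
  onE k := es.get k
  hs k := vertAt_s h k
  ht k := vertAt_t h k

end BQuiv

open BQuiv

/-!
A vertex of `P_{S,s₀} ×_Q P_{T,t₀}` is a pair `(p, q)` of paths, from `s₀` in `S` and from `t₀`
in `T`, with a common endpoint, and an arrow out of it appends the same arrow of `S ∩ T` to
both. Write `p = p' ++ u` and `q = q' ++ u` with `u` the longest common suffix. Arrows only
lengthen `u`, so the root `(p', q')` is constant on connected components, and each vertex is
reached from its root by appending `u` one arrow at a time. Hence `(p, q) ↦ u` identifies the
component with the path quiver of the part of `S ∩ T` reachable from the branch point `j`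
where `p'` and `q'` end; in an acyclic quiver no arrow of that part can return to `j`.
-/

namespace List

variable {α : Type}

open Classical in
noncomputable def commonPrefix : List α → List α → List α
  | a :: as, b :: bs => if a = b then a :: commonPrefix as bs else []
  | _, _ => []

theorem commonPrefix_cons_cons_self (a : α) (as bs : List α) :
    commonPrefix (a :: as) (a :: bs) = a :: commonPrefix as bs := by
  simp [commonPrefix]

theorem commonPrefix_append_append (c as bs : List α) :
    commonPrefix (c ++ as) (c ++ bs) = c ++ commonPrefix as bs := by
  induction c with
  | nil => rfl
  | cons a c ih => rw [cons_append, cons_append, commonPrefix_cons_cons_self, ih, cons_append]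

theorem commonPrefix_prefix_left : ∀ as bs : List α, commonPrefix as bs <+: as
  | a :: as, b :: bs => by
      by_cases h : a = b
      · subst h
        rw [commonPrefix_cons_cons_self]
        exact cons_prefix_cons.2 ⟨rfl, commonPrefix_prefix_left as bs⟩
      · simp [commonPrefix, h]
  | [], _ | _ :: _, [] => by simp [commonPrefix]

theorem commonPrefix_comm : ∀ as bs : List α, commonPrefix as bs = commonPrefix bs as
  | a :: as, b :: bs => by
      by_cases h : a = b
      · subst h
        rw [commonPrefix_cons_cons_self, commonPrefix_cons_cons_self, commonPrefix_comm as bs]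
      · simp [commonPrefix, h, Ne.symm h]
  | [], [] | [], _ :: _ | _ :: _, [] => rfl

noncomputable def commonSuffix (as bs : List α) : List α :=
  (commonPrefix as.reverse bs.reverse).reverse

theorem commonSuffix_append_append (as bs c : List α) :
    commonSuffix (as ++ c) (bs ++ c) = commonSuffix as bs ++ c := by
  simp only [commonSuffix, reverse_append, commonPrefix_append_append, reverse_reverse]

theorem commonSuffix_suffix_left (as bs : List α) : commonSuffix as bs <:+ as := by
  rw [← reverse_prefix, commonSuffix, reverse_reverse]
  exact commonPrefix_prefix_left _ _

theorem commonSuffix_suffix_right (as bs : List α) : commonSuffix as bs <:+ bs := by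
  rw [commonSuffix, commonPrefix_comm]
  exact commonSuffix_suffix_left bs as

theorem rdrop_append_of_suffix {l₁ l₂ : List α} (h : l₁ <:+ l₂) :
    l₂.rdrop l₁.length ++ l₁ = l₂ := by
  obtain ⟨t, rfl⟩ := h
  rw [rdrop_append_length]

theorem commonSuffix_rdrop_commonSuffix (as bs : List α) :
    commonSuffix (as.rdrop (commonSuffix as bs).length) (bs.rdrop (commonSuffix as bs).length)
      = [] := by
  set c := commonSuffix as bs
  have h : commonSuffix (as.rdrop c.length ++ c) (bs.rdrop c.length ++ c) = c := by
    rw [rdrop_append_of_suffix (commonSuffix_suffix_left as bs),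
      rdrop_append_of_suffix (commonSuffix_suffix_right as bs)]
  rwa [commonSuffix_append_append, append_left_eq_self] at h

end List

namespace BQuiv

variable {Q : BQuiv}

def startOf (Q : BQuiv) (b : Q.V) : List Q.E → Q.V
  | [] => b
  | e :: _ => Q.s e

theorem IsPathFrom.eq_startOf {a b : Q.V} {es : List Q.E} (h : Q.IsPathFrom a b es) :
    a = Q.startOf b es := by
  cases es with
  | nil => exact h
  | cons e es => exact h.1.symm

theorem IsPathFrom.of_append {a c : Q.V} {es fs : List Q.E}
    (h : Q.IsPathFrom a c (es ++ fs)) :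
    Q.IsPathFrom a (Q.startOf c fs) es ∧ Q.IsPathFrom (Q.startOf c fs) c fs := by
  induction es generalizing a with
  | nil => exact ⟨h.eq_startOf, h.eq_startOf ▸ h⟩
  | cons e es ih => exact ⟨⟨h.1, (ih h.2).1⟩, (ih h.2).2⟩

namespace Sub

variable {U V : Sub Q} {a b c : Q.V} {e : Q.E} {es fs : List Q.E}

theorem inter_le_left : (U.inter V).le U := ⟨fun _ h => h.1, fun _ h => h.1⟩

theorem inter_le_right : (U.inter V).le V := ⟨fun _ h => h.2, fun _ h => h.2⟩

theorem isPathIn_cons :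
    U.IsPathIn a b (e :: es) ↔ e ∈ U.edges ∧ Q.s e = a ∧ U.IsPathIn (Q.t e) b es := by
  constructor
  · rintro ⟨-, ⟨hs, hp⟩, hes⟩
    have he := hes e List.mem_cons_self
    exact ⟨he, hs, U.tgt_mem e he, hp, fun f hf => hes f (List.mem_cons_of_mem _ hf)⟩
  · rintro ⟨he, rfl, -, hp, hes⟩
    exact ⟨U.src_mem e he, ⟨rfl, hp⟩, List.forall_mem_cons.2 ⟨he, hes⟩⟩

theorem isPathIn_singleton (he : e ∈ U.edges) : U.IsPathIn (Q.s e) (Q.t e) [e] :=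
  isPathIn_cons.2 ⟨he, rfl, U.tgt_mem e he, rfl, by simp⟩

theorem IsPathIn.tgt_mem (h : U.IsPathIn a b es) : b ∈ U.verts := by
  induction es generalizing a with
  | nil => exact (show a = b from h.2.1) ▸ h.1
  | cons e es ih => exact ih (isPathIn_cons.1 h).2.2

theorem IsPathIn.append (h₁ : U.IsPathIn a b es) (h₂ : U.IsPathIn b c fs) :
    U.IsPathIn a c (es ++ fs) :=
  ⟨h₁.1, h₁.2.1.append h₂.2.1, by
    simpa only [List.mem_append, or_imp, forall_and] using ⟨h₁.2.2, h₂.2.2⟩⟩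

theorem IsPathIn.of_append (h : U.IsPathIn a c (es ++ fs)) :
    U.IsPathIn a (Q.startOf c fs) es ∧ U.IsPathIn (Q.startOf c fs) c fs := by
  have hes : U.IsPathIn a (Q.startOf c fs) es :=
    ⟨h.1, h.2.1.of_append.1, fun f hf => h.2.2 f (List.mem_append_left _ hf)⟩
  exact ⟨hes, hes.tgt_mem, h.2.1.of_append.2, fun f hf => h.2.2 f (List.mem_append_right _ hf)⟩

theorem IsPathIn.inter (hU : U.IsPathIn a b es) (hV : V.IsPathIn a b es) :
    (U.inter V).IsPathIn a b es :=
  ⟨⟨hU.1, hV.1⟩, hU.2.1, fun f hf => ⟨hU.2.2 f hf, hV.2.2 f hf⟩⟩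

theorem IsPathIn.mono (h : U.IsPathIn a b es) (hUV : U.le V) : V.IsPathIn a b es :=
  ⟨hUV.1 h.1, h.2.1, fun f hf => hUV.2 (h.2.2 f hf)⟩

theorem succClosure_le (U : Sub Q) (j : Q.V) : (succClosure U j).le U :=
  ⟨fun _ ⟨_, h⟩ => h.tgt_mem, fun _ h => h.1⟩

theorem start_mem_succClosure {j : Q.V} (hj : j ∈ U.verts) : j ∈ (succClosure U j).verts :=
  ⟨[], hj, rfl, by simp⟩

theorem mem_succClosure_edges {j : Q.V} (he : e ∈ U.edges)
    (hs : Q.s e ∈ (succClosure U j).verts) : e ∈ (succClosure U j).edges :=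
  let ⟨es, h⟩ := hs
  ⟨he, hs, es ++ [e], h.append (isPathIn_singleton he)⟩

theorem IsPathIn.succClosure_of_mem {j : Q.V} (h : U.IsPathIn a b es)
    (ha : a ∈ (succClosure U j).verts) : (succClosure U j).IsPathIn a b es := by
  induction es generalizing a with
  | nil => exact ⟨ha, h.2.1, by simp⟩
  | cons e es ih =>
      obtain ⟨he, rfl, hes⟩ := isPathIn_cons.1 h
      have he' := mem_succClosure_edges he ha
      exact isPathIn_cons.2 ⟨he', rfl, ih hes ((succClosure U j).tgt_mem e he')⟩

theorem IsPathIn.succClosure {j : Q.V} (h : U.IsPathIn j b es) :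
    (succClosure U j).IsPathIn j b es :=
  h.succClosure_of_mem (start_mem_succClosure h.1)

theorem exists_isPathIn_succClosure {j : Q.V} (hb : b ∈ (succClosure U j).verts) :
    ∃ es, (succClosure U j).IsPathIn j b es :=
  let ⟨es, h⟩ := hb
  ⟨es, h.succClosure⟩

theorem tgt_ne_of_mem_succClosure (hQ : Q.IsAcyclic) {j : Q.V}
    (he : e ∈ (succClosure U j).edges) : Q.t e ≠ j := by
  intro hej
  obtain ⟨-, ⟨es, hes⟩, -⟩ := he
  have hcycle : Q.IsPathFrom j j (es ++ [e]) := hej ▸ hes.2.1.snoc rfl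
  simpa using hQ j _ hcycle

end Sub

def Hom.IsOutInjective {A B : BQuiv} (f : Hom A B) : Prop :=
  ∀ e₁ e₂ : A.E, A.s e₁ = A.s e₂ → f.onE e₁ = f.onE e₂ → e₁ = e₂

theorem Hom.bijective_onE_of_isOutInjective {A B Q : BQuiv} {f : Hom A B} {g : Hom A Q}
    {h : Hom B Q} (hfh : f.comp h = g) (hV : Function.Bijective f.onV)
    (hg : g.IsOutInjective) (hh : h.IsOutInjective)
    (hlift : ∀ a (β : B.E), B.s β = f.onV a → ∃ α, A.s α = a ∧ g.onE α = h.onE β) :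
    Function.Bijective f.onE := by
  have hg_eq : ∀ α, g.onE α = h.onE (f.onE α) := fun α => by rw [← hfh]; rfl
  refine ⟨fun α₁ α₂ hα => hg α₁ α₂ (hV.1 ?_) (by rw [hg_eq, hg_eq, hα]), fun β => ?_⟩
  · rw [← f.hs, ← f.hs, hα]
  · obtain ⟨a, ha⟩ := hV.2 (B.s β)
    obtain ⟨α, rfl, hαβ⟩ := hlift a β ha.symm
    exact ⟨α, hh _ _ (by rw [f.hs, ha]) (by rw [← hg_eq, hαβ])⟩

theorem pathPi_isOutInjective {Q : BQuiv} (T : Sub Q) (t : Q.V) :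
    (pathPi T t).IsOutInjective :=
  fun _ _ hs he => Subtype.ext (Prod.ext (congrArg Subtype.val hs) he)

theorem fibHom_isOutInjective {Q Q' Q'' : BQuiv} {f' : Hom Q' Q} {f'' : Hom Q'' Q}
    (hf' : f'.IsOutInjective) (hf'' : f''.IsOutInjective) :
    (fibHom f' f'').IsOutInjective := by
  intro ε₁ ε₂ hs he
  have h₁ : ε₁.1.1 = ε₂.1.1 := hf' _ _ (congrArg (fun x => x.1.1) hs) he
  have h₂ : ε₁.1.2 = ε₂.1.2 :=
    hf'' _ _ (congrArg (fun x => x.1.2) hs) (by rw [← ε₁.2, ← ε₂.2, h₁])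
  exact Subtype.ext (Prod.ext h₁ h₂)

theorem componentHom_isOutInjective {X Q : BQuiv} {h : Hom X Q} (hh : h.IsOutInjective)
    (v₀ : X.V) : (componentHom h v₀).IsOutInjective :=
  fun _ _ hs he => Subtype.ext (hh _ _ (congrArg Subtype.val hs) he)

theorem Adj.symm {X : BQuiv} {x y : X.V} (h : Adj X x y) : Adj X y x :=
  let ⟨e, he⟩ := h
  ⟨e, he.symm⟩

theorem Conn.symm {X : BQuiv} {x y : X.V} (h : Conn X x y) : Conn X y x := by
  induction h with
  | refl => exact .refl
  | tail _ hyz ih => exact .head hyz.symm ih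

end BQuiv

namespace BQuiv.PathPair

variable {Q : BQuiv} {S T : Sub Q} {s₀ t₀ : Q.V}

local notation "𝔽" => Fib (pathPi S s₀) (pathPi T t₀)

def vert (x : (𝔽).V) : Q.V := x.1.1.1.1

def left (x : (𝔽).V) : List Q.E := x.1.1.1.2

def right (x : (𝔽).V) : List Q.E := x.1.2.1.2

def label (ε : (𝔽).E) : Q.E := ε.1.1.1.2

theorem isPathIn_left (x : (𝔽).V) : S.IsPathIn s₀ (vert x) (left x) := x.1.1.2

theorem isPathIn_right (x : (𝔽).V) : T.IsPathIn t₀ (vert x) (right x) :=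
  (show vert x = x.1.2.1.1 from x.2) ▸ x.1.2.2

def mk (v : Q.V) (p q : List Q.E) (hp : S.IsPathIn s₀ v p) (hq : T.IsPathIn t₀ v q) : (𝔽).V :=
  ⟨(⟨(v, p), hp⟩, ⟨(v, q), hq⟩), rfl⟩

theorem ext {x y : (𝔽).V} (hv : vert x = vert y) (hp : left x = left y)
    (hq : right x = right y) : x = y :=
  Subtype.ext (Prod.ext (Subtype.ext (Prod.ext hv hp))
    (Subtype.ext (Prod.ext (x.2.symm.trans (hv.trans y.2)) hq)))

theorem label_mem_inter (ε : (𝔽).E) : label ε ∈ (S.inter T).edges :=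
  ⟨ε.1.1.2.2.1, (show label ε = ε.1.2.1.2 from ε.2) ▸ ε.1.2.2.2.1⟩

theorem src_label (ε : (𝔽).E) : Q.s (label ε) = vert ((𝔽).s ε) := ε.1.1.2.2.2

theorem isPathIn_label (ε : (𝔽).E) :
    (S.inter T).IsPathIn (vert ((𝔽).s ε)) (Q.t (label ε)) [label ε] :=
  src_label ε ▸ Sub.isPathIn_singleton (label_mem_inter ε)

theorem exists_arrow (x : (𝔽).V) {e : Q.E} (he : e ∈ (S.inter T).edges)
    (hs : Q.s e = vert x) : ∃ ε : (𝔽).E, (𝔽).s ε = x ∧ label ε = e :=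
  ⟨⟨(⟨((vert x, left x), e), isPathIn_left x, he.1, hs⟩,
      ⟨((vert x, right x), e), isPathIn_right x, he.2, hs⟩), rfl⟩, ext rfl rfl rfl, rfl⟩

def extend (x : (𝔽).V) {v : Q.V} (u : List Q.E) (hu : (S.inter T).IsPathIn (vert x) v u) :
    (𝔽).V :=
  mk v (left x ++ u) (right x ++ u) ((isPathIn_left x).append (hu.mono Sub.inter_le_left))
    ((isPathIn_right x).append (hu.mono Sub.inter_le_right))

theorem extend_extend (x : (𝔽).V) {v w : Q.V} {u u' : List Q.E}
    (hu : (S.inter T).IsPathIn (vert x) v u) (hu' : (S.inter T).IsPathIn v w u') :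
    extend (extend x u hu) u' hu' = extend x (u ++ u') (hu.append hu') :=
  ext rfl (List.append_assoc _ _ _) (List.append_assoc _ _ _)

theorem tgt_eq_extend (ε : (𝔽).E) :
    (𝔽).t ε = extend ((𝔽).s ε) [label ε] (isPathIn_label ε) :=
  ext rfl rfl (congrArg (fun e => right ((𝔽).s ε) ++ [e]) ε.2.symm)

theorem conn_extend (x : (𝔽).V) {v : Q.V} (u : List Q.E)
    (hu : (S.inter T).IsPathIn (vert x) v u) : Conn 𝔽 x (extend x u hu) := by
  induction u generalizing x with
  | nil =>
      have hx : x = extend x [] hu := ext hu.2.1 (List.append_nil _).symm (List.append_nil _).symm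
      exact hx ▸ .refl
  | cons e u ih =>
      obtain ⟨he, hs, hu'⟩ := Sub.isPathIn_cons.1 hu
      obtain ⟨ε, rfl, rfl⟩ := exists_arrow x he hs
      have hstep : Conn 𝔽 ((𝔽).s ε) ((𝔽).t ε) := .single ⟨ε, .inl ⟨rfl, rfl⟩⟩
      rw [tgt_eq_extend] at hstep
      have hrest := ih (extend ((𝔽).s ε) [label ε] (isPathIn_label ε)) hu'
      rw [extend_extend] at hrest
      exact hstep.trans hrest

noncomputable def suffix (x : (𝔽).V) : List Q.E := List.commonSuffix (left x) (right x)

noncomputable def branchPt (x : (𝔽).V) : Q.V := Q.startOf (vert x) (suffix x)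

theorem left_eq (x : (𝔽).V) : left x = (left x).rdrop (suffix x).length ++ suffix x :=
  (List.rdrop_append_of_suffix (List.commonSuffix_suffix_left _ _)).symm

theorem right_eq (x : (𝔽).V) : right x = (right x).rdrop (suffix x).length ++ suffix x :=
  (List.rdrop_append_of_suffix (List.commonSuffix_suffix_right _ _)).symm

theorem isPathIn_left_split (x : (𝔽).V) :
    S.IsPathIn s₀ (branchPt x) ((left x).rdrop (suffix x).length) ∧
      S.IsPathIn (branchPt x) (vert x) (suffix x) := by
  have h := isPathIn_left x
  rw [left_eq x] at h
  exact h.of_append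

theorem isPathIn_right_split (x : (𝔽).V) :
    T.IsPathIn t₀ (branchPt x) ((right x).rdrop (suffix x).length) ∧
      T.IsPathIn (branchPt x) (vert x) (suffix x) := by
  have h := isPathIn_right x
  rw [right_eq x] at h
  exact h.of_append

theorem isPathIn_suffix (x : (𝔽).V) :
    (S.inter T).IsPathIn (branchPt x) (vert x) (suffix x) :=
  (isPathIn_left_split x).2.inter (isPathIn_right_split x).2

noncomputable def root (x : (𝔽).V) : (𝔽).V :=
  mk (branchPt x) _ _ (isPathIn_left_split x).1 (isPathIn_right_split x).1

theorem left_root_append_suffix (x : (𝔽).V) : left (root x) ++ suffix x = left x :=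
  (left_eq x).symm

theorem right_root_append_suffix (x : (𝔽).V) : right (root x) ++ suffix x = right x :=
  (right_eq x).symm

theorem suffix_root (x : (𝔽).V) : suffix (root x) = [] :=
  List.commonSuffix_rdrop_commonSuffix _ _

theorem extend_root (x : (𝔽).V) : extend (root x) (suffix x) (isPathIn_suffix x) = x :=
  ext rfl (left_root_append_suffix x) (right_root_append_suffix x)

theorem conn_root (x : (𝔽).V) : Conn 𝔽 (root x) x := by
  have h := conn_extend (root x) (suffix x) (isPathIn_suffix x)
  rwa [extend_root] at h

theorem suffix_extend (x : (𝔽).V) {v : Q.V} (u : List Q.E)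
    (hu : (S.inter T).IsPathIn (vert x) v u) : suffix (extend x u hu) = suffix x ++ u :=
  List.commonSuffix_append_append _ _ _

theorem branchPt_extend (x : (𝔽).V) {v : Q.V} (u : List Q.E)
    (hu : (S.inter T).IsPathIn (vert x) v u) : branchPt (extend x u hu) = branchPt x := by
  rw [branchPt, suffix_extend]
  exact ((isPathIn_suffix x).append hu).2.1.eq_startOf.symm

theorem root_extend (x : (𝔽).V) {v : Q.V} (u : List Q.E)
    (hu : (S.inter T).IsPathIn (vert x) v u) : root (extend x u hu) = root x := by
  have hlen : (suffix (extend x u hu)).length = u.length + (suffix x).length := by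
    rw [suffix_extend, List.length_append, Nat.add_comm]
  refine ext (branchPt_extend x u hu) ?_ ?_
  · show (left x ++ u).rdrop _ = (left x).rdrop _
    rw [hlen, List.rdrop_append_length_add]
  · show (right x ++ u).rdrop _ = (right x).rdrop _
    rw [hlen, List.rdrop_append_length_add]

theorem root_eq_of_conn {x y : (𝔽).V} (h : Conn 𝔽 x y) : root x = root y := by
  induction h with
  | refl => rfl
  | tail _ hyz ih =>
      obtain ⟨ε, ⟨rfl, rfl⟩ | ⟨rfl, rfl⟩⟩ := hyz
      · rw [ih, tgt_eq_extend, root_extend]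
      · rw [ih, tgt_eq_extend, root_extend]

theorem eq_of_root_eq {x y : (𝔽).V} (hr : root x = root y) (hv : vert x = vert y)
    (hs : suffix x = suffix y) : x = y := by
  refine ext hv ?_ ?_
  · rw [← left_root_append_suffix x, ← left_root_append_suffix y, hr, hs]
  · rw [← right_root_append_suffix x, ← right_root_append_suffix y, hr, hs]

theorem branchPt_eq_of_conn {x y : (𝔽).V} (h : Conn 𝔽 x y) : branchPt x = branchPt y :=
  congrArg vert (root_eq_of_conn h)

variable (v₀ : (Fib (pathPi S s₀) (pathPi T t₀)).V)

local notation "W" => succClosure (S.inter T) (branchPt v₀)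

theorem isPathIn_suffix_of_conn {x : (𝔽).V} (h : Conn 𝔽 v₀ x) :
    (W).IsPathIn (branchPt v₀) (vert x) (suffix x) := by
  rw [branchPt_eq_of_conn h]
  exact (isPathIn_suffix x).succClosure

noncomputable def componentToPathQ : Hom (Component 𝔽 v₀) (PathQ W (branchPt v₀)) where
  onV x := ⟨(vert x.1, suffix x.1), isPathIn_suffix_of_conn v₀ x.2⟩
  onE ε := ⟨((vert ((𝔽).s ε.1), suffix ((𝔽).s ε.1)), label ε.1),
    isPathIn_suffix_of_conn v₀ ε.2,
    Sub.mem_succClosure_edges (label_mem_inter ε.1)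
      (src_label ε.1 ▸ (isPathIn_suffix_of_conn v₀ ε.2).tgt_mem),
    src_label ε.1⟩
  hs _ := rfl
  ht ε := Subtype.ext (Prod.ext rfl (by
    show suffix ((𝔽).s ε.1) ++ [label ε.1] = suffix ((𝔽).t ε.1)
    rw [tgt_eq_extend, suffix_extend]))

theorem componentToPathQ_bijective_onV : Function.Bijective (componentToPathQ v₀).onV := by
  constructor
  · intro x y hxy
    have hr : root x.1 = root y.1 := (root_eq_of_conn x.2).symm.trans (root_eq_of_conn y.2)
    exact Subtype.ext (eq_of_root_eq hr (congrArg (fun z => z.1.1) hxy)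
      (congrArg (fun z => z.1.2) hxy))
  · rintro ⟨⟨v, u⟩, hu⟩
    have hu' : (S.inter T).IsPathIn (vert (root v₀)) v u := hu.mono (Sub.succClosure_le _ _)
    refine ⟨⟨extend (root v₀) u hu', (conn_root v₀).symm.trans (conn_extend _ u hu')⟩, ?_⟩
    exact Subtype.ext (Prod.ext rfl
      ((suffix_extend _ u hu').trans (by rw [suffix_root, List.nil_append])))

theorem componentToPathQ_comp :
    (componentToPathQ v₀).comp (pathPi W (branchPt v₀)) =
      componentHom (fibHom (pathPi S s₀) (pathPi T t₀)) v₀ :=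
  Hom.ext rfl rfl

noncomputable def componentOverIso :
    OverIso (componentHom (fibHom (pathPi S s₀) (pathPi T t₀)) v₀) (pathPi W (branchPt v₀)) where
  hom := componentToPathQ v₀
  comm := componentToPathQ_comp v₀
  bijV := componentToPathQ_bijective_onV v₀
  bijE := by
    refine Hom.bijective_onE_of_isOutInjective (componentToPathQ_comp v₀)
      (componentToPathQ_bijective_onV v₀)
      (componentHom_isOutInjective
        (fibHom_isOutInjective (pathPi_isOutInjective S s₀) (pathPi_isOutInjective T t₀)) v₀)
      (pathPi_isOutInjective _ _) ?_
    intro x β hβ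
    have hv : β.1.1.1 = vert x.1 := congrArg (fun z => z.1.1) hβ
    obtain ⟨ε, hε, hl⟩ :=
      exists_arrow x.1 ((Sub.succClosure_le _ _).2 β.2.2.1) (β.2.2.2.trans hv)
    exact ⟨⟨ε, hε ▸ x.2⟩, Subtype.ext hε, hl⟩

end BQuiv.PathPair

theorem component_pathQuiver_prod_pathQuiver_general
    (Q : BQuiv) (hQ : Q.IsAcyclic)
    (S T : Sub Q) (s₀ t₀ : Q.V) :
    ∀ v₀ : (Fib (pathPi S s₀) (pathPi T t₀)).V,
      ∃ (W : Sub Q) (j : Q.V), j ∈ W.verts ∧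
        (∀ e ∈ W.edges, Q.t e ≠ j) ∧
        (∀ v ∈ W.verts, ∃ es, W.IsPathIn j v es) ∧
        Nonempty (OverIso (componentHom (fibHom (pathPi S s₀) (pathPi T t₀)) v₀)
          (pathPi W j)) := by
  intro v₀
  refine ⟨succClosure (S.inter T) (PathPair.branchPt v₀), PathPair.branchPt v₀, ?_, ?_, ?_,
    ⟨PathPair.componentOverIso v₀⟩⟩
  · exact Sub.start_mem_succClosure (PathPair.isPathIn_suffix v₀).1
  · exact fun _ => Sub.tgt_ne_of_mem_succClosure hQ
  · exact fun _ => Sub.exists_isPathIn_succClosure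

/-- Every connected component of the fiber product `P_{S,s₀} ×_Q
P_{T,t₀}` is isomorphic over `Q` to a path quiver `P_{W,j}`, where `j` is a source of the
subquiver `W` from which every vertex of `W` is reachable in `W`. -/
theorem component_pathQuiver_prod_pathQuiver
    (Q : BQuiv) [Fintype Q.V] [Fintype Q.E] (hQ : Q.IsAcyclic)
    (S T : Sub Q) (s₀ t₀ : Q.V)
    (hS : S.IsUniqueSource s₀) (hT : T.IsUniqueSource t₀) :
    ∀ v₀ : (Fib (pathPi S s₀) (pathPi T t₀)).V,
      ∃ (W : Sub Q) (j : Q.V), j ∈ W.verts ∧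
        (∀ e ∈ W.edges, Q.t e ≠ j) ∧
        (∀ v ∈ W.verts, ∃ es, W.IsPathIn j v es) ∧
        Nonempty (OverIso (componentHom (fibHom (pathPi S s₀) (pathPi T t₀)) v₀)
          (pathPi W j)) :=
  component_pathQuiver_prod_pathQuiver_general Q hQ S T s₀ t₀
end

section
/- Let K be a field, Q a finite quiver, T a subquiver of Q, and (Q', f') a quiver over Q with Q' finite, such that the linearizations f'_* 𝟙_{Q'} and (ι_T)_* 𝟙_T are isomorphic as representations of Q over K. Then: (i) for every vertex x of T, f'⁻¹(x) has exactly one element, and f'⁻¹(x) is empty for every vertex x not in T; (ii) Q' has at least as many arrows as T; and (iii) if Q' has exactly as many arrows as T, then (Q', f') and E_T are isomorphic as quivers over Q. -/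
namespace BQuiv

open CategoryTheory

/-- The Mathlib `Quiver` structure on the vertices of a bundled quiver. -/
instance instQuiver (Q : BQuiv) : Quiver Q.V :=
  ⟨fun a b => {e : Q.E // Q.s e = a ∧ Q.t e = b}⟩

open Classical in
/-- The linearization of a quiver `(Q', f')` over `Q`, on the level of a prefunctor:
at a vertex `x` of `Q` it is the free `K`-module on the fiber `f'⁻¹(x)`, and an arrow
`α : x ⟶ y` acts by sending the basis vector at `v ∈ f'⁻¹(x)` to the sum of the basis
vectors at `t(β)` over all arrows `β` of `Q'` lying over `α` and starting at `v`. -/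
noncomputable def linPre (K : Type) [Field K] {Q' Q : BQuiv} (f' : Hom Q' Q) :
    Prefunctor Q.V (ModuleCat K) where
  obj x := ModuleCat.of K ({v : Q'.V // f'.onV v = x} →₀ K)
  map {x y} α := ModuleCat.ofHom
    (Finsupp.lsum K fun v =>
      LinearMap.toSpanSingleton K ({v : Q'.V // f'.onV v = y} →₀ K)
        (∑ᶠ β : Q'.E,
          if h : f'.onE β = α.1 ∧ Q'.s β = v.1 then
            Finsupp.single
              (⟨Q'.t β, by rw [← f'.ht, h.1]; exact α.2.2⟩ : {v : Q'.V // f'.onV v = y})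
              (1 : K)
          else 0) :
      ({v : Q'.V // f'.onV v = x} →₀ K) →ₗ[K] ({v : Q'.V // f'.onV v = y} →₀ K))

/-- The linearization `f'_* 𝟙_{Q'}` of a quiver `(Q', f')` over `Q`, as a representation
of `Q` over `K`. -/
noncomputable def linRep (K : Type) [Field K] {Q' Q : BQuiv} (f' : Hom Q' Q) :
    Paths Q.V ⥤ ModuleCat K :=
  Paths.lift (linPre K f')

end BQuiv

open BQuiv

/-!
The value of a linearization at a vertex `x` is the free module on the fiber over `x`, so an
isomorphism `f'_* 𝟙_{Q'} ≅ (ι_T)_* 𝟙_T` matches every fiber of `f'` with the corresponding fiber of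
`ι_T`: a point over a vertex of `T`, empty elsewhere. An arrow `α` of `T` acts nontrivially on
`(ι_T)_* 𝟙_T`, while it acts by zero on `f'_* 𝟙_{Q'}` if no arrow of `Q'` lies over it; hence `f'`
hits every arrow of `T`, and when the arrow counts agree it is a bijection onto them.
-/

open CategoryTheory

theorem Set.nat_card_le_of_subset_range {A B : Type*} [Finite A] {g : A → B} {S : Set B}
    (h : S ⊆ Set.range g) : Nat.card S ≤ Nat.card A :=
  (Nat.card_mono (Set.finite_range g) h).trans (Finite.card_range_le g)

theorem Set.bijective_codRestrict_of_subset_range {A B : Type*} [Finite A] {g : A → B}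
    {S : Set B} (h : S ⊆ Set.range g) (hcard : Nat.card A ≤ Nat.card S) :
    ∃ hg : ∀ a, g a ∈ S, Function.Bijective (S.codRestrict g hg) := by
  obtain rfl : S = Set.range g :=
    (Set.finite_range g).eq_of_subset_of_card_le h ((Finite.card_range_le g).trans hcard)
  exact ⟨Set.mem_range_self, Set.rangeFactorization_surjective.bijective_of_nat_card_le hcard⟩

theorem Set.bijective_codRestrict_of_fiber {A B : Type*} {g : A → B} {S : Set B}
    (hg : ∀ a, g a ∈ S) (hsub : ∀ b, Subsingleton {a // g a = b})
    (hne : ∀ b ∈ S, Nonempty {a // g a = b}) : Function.Bijective (S.codRestrict g hg) := by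
  refine ⟨fun a a' h => ?_, fun ⟨b, hb⟩ => ?_⟩
  · have hgg : g a = g a' := congrArg Subtype.val h
    exact congrArg Subtype.val (Subsingleton.elim (α := {a // g a = g a'}) ⟨a, hgg⟩ ⟨a', rfl⟩)
  · obtain ⟨⟨a, rfl⟩⟩ := hne b hb
    exact ⟨a, rfl⟩

theorem CategoryTheory.Functor.map_eq_zero_of_iso {C D : Type*} [Category C] [Category D]
    [Limits.HasZeroMorphisms D] {F G : C ⥤ D} (t : F ≅ G) {X Y : C} {f : X ⟶ Y}
    (h : F.map f = 0) : G.map f = 0 := by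
  rw [← NatIso.naturality_2 t.symm f, h, Limits.zero_comp, Limits.comp_zero]

namespace BQuiv

variable {K : Type} [Field K]

theorem linPre_map_eq_zero {Q' Q : BQuiv} (f' : Hom Q' Q) {x y : Q.V} (α : x ⟶ y)
    (h : ∀ β, f'.onE β ≠ α.1) : (linPre K f').map α = 0 := by
  ext v : 2
  simp only [linPre, h, false_and, ↓reduceDIte, finsum_zero, LinearMap.toSpanSingleton_zero,
    ConcreteCategory.hom_ofHom]
  erw [map_zero]
  rfl

open Classical in
theorem linPre_map_single {Q' Q : BQuiv} (f' : Hom Q' Q) {x y : Q.V} (α : x ⟶ y)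
    (v : {v : Q'.V // f'.onV v = x}) :
    (linPre K f').map α (Finsupp.single v 1) = ∑ᶠ β : Q'.E,
          if h : f'.onE β = α.1 ∧ Q'.s β = v.1 then
            Finsupp.single
              (⟨Q'.t β, by rw [← f'.ht, h.1]; exact α.2.2⟩ : {v : Q'.V // f'.onV v = y})
              (1 : K)
          else 0 := by
  erw [Finsupp.lsum_single, LinearMap.toSpanSingleton_apply_one]

theorem linPre_incl_map_ne_zero {Q : BQuiv} (T : Sub Q) {x y : Q.V} (α : x ⟶ y)
    (hα : α.1 ∈ T.edges) : (linPre K T.incl).map α ≠ 0 := by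
  intro h
  have hx : x ∈ T.verts := α.2.1 ▸ T.src_mem _ hα
  have hmap := linPre_map_single (K := K) T.incl α ⟨(⟨x, hx⟩ : T.toBQuiv.V), rfl⟩
  rw [h, finsum_eq_single _ (show T.toBQuiv.E from ⟨α.1, hα⟩), dif_pos ⟨rfl, Subtype.ext α.2.1⟩]
    at hmap
  · exact Finsupp.single_ne_zero.2 one_ne_zero (hmap.symm.trans rfl)
  · intro β hβ
    rw [dif_neg]
    rintro ⟨hβα, -⟩
    exact hβ (Subtype.ext hβα)

theorem edges_subset_range_of_iso {Q' Q : BQuiv} {f' : Hom Q' Q} {T : Sub Q}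
    (t : linRep K f' ≅ linRep K T.incl) : T.edges ⊆ Set.range f'.onE := by
  intro α hα
  by_contra hnot
  let a : Q.s α ⟶ Q.t α := ⟨α, rfl, rfl⟩
  have hzero := linPre_map_eq_zero (K := K) f' a fun β hβ => hnot ⟨β, hβ⟩
  apply linPre_incl_map_ne_zero (K := K) T a hα
  have := Functor.map_eq_zero_of_iso t (f := Quiver.Hom.toPath a)
    (by simp only [linRep, Paths.lift_toPath]; exact hzero)
  simp only [linRep, Paths.lift_toPath] at this
  exact this

theorem nonempty_fiber_equiv_of_iso {Q' Q'' Q : BQuiv} {f' : Hom Q' Q} {f'' : Hom Q'' Q}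
    (t : linRep K f' ≅ linRep K f'') (x : Q.V) :
    Nonempty ({v : Q'.V // f'.onV v = x} ≃ {v : Q''.V // f''.onV v = x}) :=
  ⟨(Finsupp.basisSingleOne.map (t.app x).toLinearEquiv).indexEquiv Finsupp.basisSingleOne⟩

instance {Q : BQuiv} (T : Sub Q) (x : Q.V) :
    Subsingleton {w : T.toBQuiv.V // T.incl.onV w = x} :=
  ⟨fun w w' => Subtype.ext (Subtype.ext (w.2.trans w'.2.symm))⟩

theorem Sub.nonempty_incl_fiber_iff {Q : BQuiv} (T : Sub Q) (x : Q.V) :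
    Nonempty {w : T.toBQuiv.V // T.incl.onV w = x} ↔ x ∈ T.verts :=
  ⟨fun ⟨w, hw⟩ => hw ▸ w.2, fun hx => ⟨⟨⟨x, hx⟩, rfl⟩⟩⟩

def Hom.corestrict {Q' Q : BQuiv} (f' : Hom Q' Q) (T : Sub Q)
    (hV : ∀ v, f'.onV v ∈ T.verts) (hE : ∀ e, f'.onE e ∈ T.edges) : Hom Q' T.toBQuiv where
  onV := T.verts.codRestrict f'.onV hV
  onE := T.edges.codRestrict f'.onE hE
  hs e := Subtype.ext (f'.hs e)
  ht e := Subtype.ext (f'.ht e)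

end BQuiv

theorem structure_quiver_of_idempotent_general
    (K : Type) [Field K] (Q Q' : BQuiv)
    [Fintype Q'.E]
    (T : Sub Q) (f' : Hom Q' Q)
    (hiso : Nonempty (linRep K f' ≅ linRep K T.incl)) :
    (∀ x ∈ T.verts, Nat.card {v : Q'.V // f'.onV v = x} = 1) ∧
    (∀ x ∉ T.verts, IsEmpty {v : Q'.V // f'.onV v = x}) ∧
    Nat.card (↥T.edges) ≤ Nat.card Q'.E ∧
    (Nat.card Q'.E = Nat.card (↥T.edges) → Nonempty (OverIso f' T.incl)) := by
  obtain ⟨t⟩ := hiso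
  have hsub (x : Q.V) : Subsingleton {v : Q'.V // f'.onV v = x} :=
    (nonempty_fiber_equiv_of_iso t x).some.subsingleton
  have hne (x : Q.V) : Nonempty {v : Q'.V // f'.onV v = x} ↔ x ∈ T.verts :=
    (nonempty_fiber_equiv_of_iso t x).some.nonempty_congr.trans (T.nonempty_incl_fiber_iff x)
  have hE := edges_subset_range_of_iso t
  refine ⟨fun x hx => Nat.card_eq_one_iff_unique.2 ⟨hsub x, (hne x).2 hx⟩,
    fun x hx => not_nonempty_iff.1 (mt (hne x).1 hx), Set.nat_card_le_of_subset_range hE,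
    fun hcard => ?_⟩
  have hV (v : Q'.V) : f'.onV v ∈ T.verts := (hne _).1 ⟨⟨v, rfl⟩⟩
  obtain ⟨hE', hbijE⟩ := Set.bijective_codRestrict_of_subset_range hE hcard.le
  exact ⟨⟨f'.corestrict T hV hE', rfl,
    Set.bijective_codRestrict_of_fiber hV hsub fun x hx => (hne x).2 hx, hbijE⟩⟩

/-- If the linearization of a finite quiver `(Q', f')` over `Q` is
isomorphic to the idempotent representation `(ι_T)_* 𝟙_T` of a subquiver `T`, then the
fibers of `f'` are singletons over vertices of `T` and empty elsewhere, `Q'` has at least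
as many arrows as `T`, and in case of equality `(Q', f')` is isomorphic to `E_T` over
`Q`. -/
theorem structure_quiver_of_idempotent
    (K : Type) [Field K] (Q Q' : BQuiv) [Fintype Q.V] [Fintype Q.E]
    [Fintype Q'.V] [Fintype Q'.E]
    (T : Sub Q) (f' : Hom Q' Q)
    (hiso : Nonempty (linRep K f' ≅ linRep K T.incl)) :
    (∀ x ∈ T.verts, Nat.card {v : Q'.V // f'.onV v = x} = 1) ∧
    (∀ x ∉ T.verts, IsEmpty {v : Q'.V // f'.onV v = x}) ∧
    Nat.card (↥T.edges) ≤ Nat.card Q'.E ∧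
    (Nat.card Q'.E = Nat.card (↥T.edges) → Nonempty (OverIso f' T.incl)) :=
  structure_quiver_of_idempotent_general K Q Q' T f' hiso
end
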